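/- arXiv:1909.04081 — 5 statements merged into one kernel-verified Lean document; each statement's English description precedes it below -/
import Mathlib

section
/- For n ≥ 3, any k in [1,n], and any two distinct vertices u, v of the subgraph BS_n^k of the bubble-sort star graph BS_n, the sets {u^+, u^-} and {v^+, v^-} are disjoint, where w^- = w∘(n-1,n) and w^+ = w∘(1,n). -/
open SimpleGraph

/-- Adjacency relation of the bubble-sort star graph: `y` is obtained from `x` by
swapping the symbols at positions `i` and `j` (0-indexed), where either `j = i+1`
(an adjacent transposition, i.e. positions `k-1, k` for `k ∈ [2,n]`) or `i = 0`
(a star transposition, i.e. positions `1, k` for `k ∈ [2,n]`). -/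
def BSRel (n : ℕ) (x y : Equiv.Perm (Fin n)) : Prop :=
  ∃ i j : Fin n, (j.val = i.val + 1 ∨ i.val = 0) ∧ i ≠ j ∧ y = x * Equiv.swap i j

/-- The n-dimensional bubble-sort star graph `BS_n` on the permutations of `{1,…,n}`. -/
def BS (n : ℕ) : SimpleGraph (Equiv.Perm (Fin n)) :=
  SimpleGraph.fromRel (BSRel n)

/-- The degree of a vertex, as the cardinality of its neighbour set. -/
noncomputable def deg {V : Type*} (G : SimpleGraph V) (v : V) : ℕ :=
  (G.neighborSet v).ncard

/-- `G` contains `m` pairwise edge-disjoint paths joining `u` and `v`. -/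
def HasEdgeDisjointPaths {V : Type*} (G : SimpleGraph V) (u v : V) (m : ℕ) : Prop :=
  ∃ P : Fin m → G.Path u v, ∀ i j : Fin m, i ≠ j →
    List.Disjoint ((P i : G.Walk u v).edges) ((P j : G.Walk u v).edges)

lemma swap_mul_ne_aux {n : ℕ} {a b c : Fin n} (hab : a ≠ b) (hac : a ≠ c) {k : Fin n}
    (w z : Equiv.Perm (Fin n)) (hw : w c = k) (hz : z c = k) :
    w * Equiv.swap a c ≠ z * Equiv.swap b c := by
  intro h
  have h1 : (w * Equiv.swap a c) a = (z * Equiv.swap b c) a := by rw [h]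
  simp only [Equiv.Perm.mul_apply, Equiv.swap_apply_left,
    Equiv.swap_apply_of_ne_of_ne hab hac] at h1
  rw [hw] at h1
  exact hac (z.injective (by rw [← h1, hz]))

/-- For `n ≥ 3`, any `k`, and distinct vertices `u, v` of `BS_n^k`, the pairs of outside
neighbours `{u⁺, u⁻}` and `{v⁺, v⁻}` are disjoint, where `w⁻ = w∘(n-1,n)`, `w⁺ = w∘(1,n)`. -/
theorem BS_outside_neighbors_disjoint (n : ℕ) (hn : 3 ≤ n) (k : Fin n)
    (u v : Equiv.Perm (Fin n))
    (hu : u ⟨n - 1, by omega⟩ = k) (hv : v ⟨n - 1, by omega⟩ = k) (huv : u ≠ v) :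
    ({u * Equiv.swap ⟨0, by omega⟩ ⟨n - 1, by omega⟩,
      u * Equiv.swap ⟨n - 2, by omega⟩ ⟨n - 1, by omega⟩} : Set (Equiv.Perm (Fin n))) ∩
    ({v * Equiv.swap ⟨0, by omega⟩ ⟨n - 1, by omega⟩,
      v * Equiv.swap ⟨n - 2, by omega⟩ ⟨n - 1, by omega⟩} : Set (Equiv.Perm (Fin n))) = ∅ := by
  have hac : (⟨0, by omega⟩ : Fin n) ≠ ⟨n - 1, by omega⟩ := by
    simp [Fin.ext_iff]; omega
  have hbc : (⟨n - 2, by omega⟩ : Fin n) ≠ ⟨n - 1, by omega⟩ := by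
    simp [Fin.ext_iff]; omega
  have hab : (⟨0, by omega⟩ : Fin n) ≠ ⟨n - 2, by omega⟩ := by
    simp [Fin.ext_iff]; omega
  ext x
  simp only [Set.mem_inter_iff, Set.mem_insert_iff, Set.mem_singleton_iff,
    Set.mem_empty_iff_false, iff_false, not_and, not_or]
  rintro (rfl | rfl) <;> constructor <;> intro h
  · exact huv (mul_right_cancel h)
  · exact swap_mul_ne_aux hab hac u v hu hv h
  · exact swap_mul_ne_aux hab hac v u hv hu h.symm
  · exact huv (mul_right_cancel h)
end

section
/- Let F_e be a set of at most 4 edges of the 3-dimensional bubble-sort star graph BS_3. If BS_3 − F_e is disconnected, then BS_3 − F_e has exactly two connected components, one of which is an isolated vertex or a single edge. -/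
open SimpleGraph

/-!
All three transpositions of `Fin 3` are generators, so `BS 3` is `K_{3,3}` with the even and the
odd permutations as its sides, and a vertex set containing `a` even and `b` odd permutations is
left by `a (3 - b) + b (3 - a)` edges. Every edge of `BS 3` between two components of `BS 3 - F`
lies in `F`. Cuts of at most four edges only separate one or two vertices from the rest, and a
partition into three nonempty parts cuts at least five edges; hence `BS 3 - F` has exactly two
components, one of them with at most two vertices.
-/

open Finset

lemma Sym2.card_filter_mk_mem_le {V : Type*} [Fintype V] [DecidableEq V] (F : Set (Sym2 V))
    [DecidablePred (· ∈ F)] : #{p : V × V | s(p.1, p.2) ∈ F} ≤ 2 * F.ncard := by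
  rw [Set.ncard_eq_toFinset_card']
  refine card_le_mul_card_image_of_maps_to (fun p hp => by simpa using hp) 2 fun e _ => ?_
  induction e using Sym2.ind with
  | _ x y =>
    calc #{p ∈ {p : V × V | s(p.1, p.2) ∈ F} | s(p.1, p.2) = s(x, y)}
        ≤ #{(x, y), (y, x)} := card_le_card fun p hp => by
          obtain ⟨a, b⟩ := p
          simp only [mem_filter, Sym2.eq_iff] at hp
          rcases hp.2 with ⟨rfl, rfl⟩ | ⟨rfl, rfl⟩ <;> simp
      _ ≤ 2 := card_le_two

namespace SimpleGraph

open Function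

variable {V : Type*} {G : SimpleGraph V} [DecidableRel G.Adj]

lemma card_interedges_comm (s t : Finset V) : #(G.interedges s t) = #(G.interedges t s) :=
  have : Std.Symm G.Adj := ⟨fun _ _ h => h.symm⟩
  Rel.card_interedges_comm s t

variable [DecidableEq V]

lemma card_interedges_of_adj_iff {E : Finset V} (hG : ∀ x y, G.Adj x y ↔ (x ∈ E ↔ y ∉ E))
    (S T : Finset V) :
    #(G.interedges S T) = #(S ∩ E) * #(T \ E) + #(S \ E) * #(T ∩ E) := by
  have hsplit : G.interedges S T = (S ∩ E) ×ˢ (T \ E) ∪ (S \ E) ×ˢ (T ∩ E) := by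
    ext ⟨x, y⟩
    simp only [mk_mem_interedges_iff, hG, mem_union, mem_product, mem_inter, mem_sdiff]
    tauto
  rw [hsplit, card_union_of_disjoint, card_product, card_product]
  exact disjoint_product.2 (Or.inl (disjoint_sdiff_inter S E).symm)

/-- The parts are unions of components of `G - F`, so the edges leaving them lie in `F`; each edge
of `F` is counted at most twice. -/
lemma sum_card_interedges_compl_le [Fintype V] {F : Set (Sym2 V)} {ι : Type*} [Fintype ι]
    {S : ι → Finset V} (hS : Pairwise (Disjoint on S))
    (hclosed : ∀ i u v, (G.deleteEdges F).Adj u v → u ∈ S i → v ∈ S i) :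
    ∑ i, #(G.interedges (S i) (S i)ᶜ) ≤ 2 * F.ncard := by
  classical
  have hdisj : ((univ : Finset ι) : Set ι).PairwiseDisjoint fun i => G.interedges (S i) (S i)ᶜ :=
    fun _ _ _ _ hij => Finset.disjoint_left.2 fun _ hpi hpj =>
      Finset.disjoint_left.1 (hS hij) (G.mem_interedges_iff.1 hpi).1 (G.mem_interedges_iff.1 hpj).1
  calc ∑ i, #(G.interedges (S i) (S i)ᶜ)
      = #(univ.biUnion fun i => G.interedges (S i) (S i)ᶜ) :=
        (card_biUnion hdisj).symm
    _ ≤ #{p : V × V | s(p.1, p.2) ∈ F} := card_le_card fun p hp => ?_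
    _ ≤ 2 * F.ncard := Sym2.card_filter_mk_mem_le F
  obtain ⟨i, -, hp⟩ := mem_biUnion.1 hp
  rw [G.mem_interedges_iff, mem_compl] at hp
  rw [mem_filter]
  refine ⟨mem_univ _, by_contra fun hpF => hp.2.1 (hclosed i _ _ ?_ hp.1)⟩
  exact deleteEdges_adj.2 ⟨hp.2.2, hpF⟩

end SimpleGraph

instance (n : ℕ) (x y : Equiv.Perm (Fin n)) : Decidable (BSRel n x y) := by
  unfold BSRel
  infer_instance

instance (n : ℕ) : DecidableRel (BS n).Adj := fun x y =>
  decidable_of_iff (x ≠ y ∧ (BSRel n x y ∨ BSRel n y x)) (fromRel_adj _ _ _).symm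

namespace BS3

def evenPerms : Finset (Equiv.Perm (Fin 3)) := {x | Equiv.Perm.sign x = 1}

lemma adj_iff (x y : Equiv.Perm (Fin 3)) : (BS 3).Adj x y ↔ (x ∈ evenPerms ↔ y ∉ evenPerms) := by
  revert x y
  decide

lemma card_evenPerms : #evenPerms = 3 := by decide

lemma card_compl_evenPerms : #evenPermsᶜ = 3 := by decide

def cutSize (a b : ℕ) : ℕ := a * (3 - b) + b * (3 - a)

lemma card_interedges_compl (S : Finset (Equiv.Perm (Fin 3))) :
    #((BS 3).interedges S Sᶜ) = cutSize #(S ∩ evenPerms) #(S \ evenPerms) := by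
  have heven : #(Sᶜ ∩ evenPerms) = 3 - #(S ∩ evenPerms) := by
    rw [inter_comm, ← sdiff_eq_inter_compl, card_sdiff, inter_comm, card_evenPerms]
  have hodd : #(Sᶜ \ evenPerms) = 3 - #(S \ evenPerms) := by
    rw [sdiff_eq_inter_compl, inter_comm, ← sdiff_eq_inter_compl, card_sdiff,
      ← sdiff_eq_inter_compl, card_compl_evenPerms]
  rw [card_interedges_of_adj_iff adj_iff, heven, hodd, cutSize]

lemma add_le_two_or_four_le_add_of_cutSize_le {a b : ℕ} (ha : a ≤ 3) (hb : b ≤ 3)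
    (h : cutSize a b ≤ 4) : a + b ≤ 2 ∨ 4 ≤ a + b := by
  unfold cutSize at h
  interval_cases a <;> interval_cases b <;> omega

/-- Every partition of `K_{3,3}` into three nonempty parts cuts at least five edges, each counted
twice here. -/
lemma ten_le_cutSize_add {a₁ b₁ a₂ b₂ : ℕ} (h₁ : 0 < a₁ + b₁) (h₂ : 0 < a₂ + b₂)
    (ha : a₁ + a₂ ≤ 3) (hb : b₁ + b₂ ≤ 3) (hlt : a₁ + a₂ + b₁ + b₂ < 6) :
    10 ≤ cutSize a₁ b₁ + cutSize a₂ b₂ + cutSize (a₁ + a₂) (b₁ + b₂) := by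
  unfold cutSize
  have : a₁ ≤ 3 := by omega
  have : a₂ ≤ 3 := by omega
  have : b₁ ≤ 3 := by omega
  have : b₂ ≤ 3 := by omega
  interval_cases a₁ <;> interval_cases a₂ <;> interval_cases b₁ <;> interval_cases b₂ <;> omega

lemma card_inter_evenPerms_le (S : Finset (Equiv.Perm (Fin 3))) : #(S ∩ evenPerms) ≤ 3 :=
  (card_le_card inter_subset_right).trans_eq card_evenPerms

lemma card_sdiff_evenPerms_le (S : Finset (Equiv.Perm (Fin 3))) : #(S \ evenPerms) ≤ 3 :=
  (card_le_card fun _ hx => mem_compl.2 (mem_sdiff.1 hx).2).trans_eq card_compl_evenPerms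

lemma card_add_card_compl_eq_six (S : Finset (Equiv.Perm (Fin 3))) : #S + #Sᶜ = 6 :=
  Finset.card_add_card_compl S

lemma card_le_two_or_card_compl_le_two {S : Finset (Equiv.Perm (Fin 3))}
    (h : #((BS 3).interedges S Sᶜ) ≤ 4) : #S ≤ 2 ∨ #Sᶜ ≤ 2 := by
  rw [card_interedges_compl] at h
  have hS := card_inter_add_card_sdiff S evenPerms
  have := card_add_card_compl_eq_six S
  rcases add_le_two_or_four_le_add_of_cutSize_le (card_inter_evenPerms_le S)
    (card_sdiff_evenPerms_le S) h with h | h <;> omega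

lemma ten_le_sum_card_interedges_compl {A B : Finset (Equiv.Perm (Fin 3))} (hAB : Disjoint A B)
    (hA : A.Nonempty) (hB : B.Nonempty) (hR : (A ∪ B)ᶜ.Nonempty) :
    10 ≤ #((BS 3).interedges A Aᶜ) + #((BS 3).interedges B Bᶜ) +
      #((BS 3).interedges (A ∪ B)ᶜ (A ∪ B)ᶜᶜ) := by
  have heven : #((A ∪ B) ∩ evenPerms) = #(A ∩ evenPerms) + #(B ∩ evenPerms) := by
    rw [union_inter_distrib_right, card_union_of_disjoint
      (hAB.mono inter_subset_left inter_subset_left)]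
  have hodd : #((A ∪ B) \ evenPerms) = #(A \ evenPerms) + #(B \ evenPerms) := by
    rw [union_sdiff_distrib, card_union_of_disjoint (hAB.mono sdiff_subset sdiff_subset)]
  rw [compl_compl, card_interedges_comm (A ∪ B)ᶜ, card_interedges_compl, card_interedges_compl,
    card_interedges_compl, heven, hodd]
  have hAcard := card_inter_add_card_sdiff A evenPerms
  have hBcard := card_inter_add_card_sdiff B evenPerms
  have hABcard := card_inter_add_card_sdiff (A ∪ B) evenPerms
  have hRcard := card_add_card_compl_eq_six (A ∪ B)
  have := card_inter_evenPerms_le (A ∪ B)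
  have := card_sdiff_evenPerms_le (A ∪ B)
  have := hA.card_pos
  have := hB.card_pos
  have := hR.card_pos
  apply ten_le_cutSize_add <;> omega

section Components

variable {F : Set (Sym2 (Equiv.Perm (Fin 3)))}

lemma connectedComponent_eq_or_eq_of_ne (hF : F.ncard ≤ 4)
    {C D : ((BS 3).deleteEdges F).ConnectedComponent} (hCD : C ≠ D)
    (E : ((BS 3).deleteEdges F).ConnectedComponent) : E = C ∨ E = D := by
  classical
  by_contra! hE
  set A := C.supp.toFinset
  set B := D.supp.toFinset
  have hAB : Disjoint A B :=
    Set.disjoint_toFinset.2 (pairwise_disjoint_supp_connectedComponent _ hCD)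
  have hR : (A ∪ B)ᶜ.Nonempty := by
    obtain ⟨w, hw⟩ := E.nonempty_supp
    refine ⟨w, ?_⟩
    simp only [A, B, mem_compl, mem_union, Set.mem_toFinset, ConnectedComponent.mem_supp_iff]
      at hw ⊢
    rw [hw]
    exact not_or.2 hE
  have hclosed : ∀ i u v, ((BS 3).deleteEdges F).Adj u v →
      u ∈ ![A, B, (A ∪ B)ᶜ] i → v ∈ ![A, B, (A ∪ B)ᶜ] i := by
    intro i u v huv
    have hCuv := C.mem_supp_congr_adj huv
    have hDuv := D.mem_supp_congr_adj huv
    fin_cases i <;> simp [A, B, hCuv, hDuv]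
  have hAR : Disjoint A (A ∪ B)ᶜ := disjoint_compl_right.mono_left subset_union_left
  have hBR : Disjoint B (A ∪ B)ᶜ := disjoint_compl_right.mono_left subset_union_right
  have hdisj : Pairwise (Function.onFun Disjoint ![A, B, (A ∪ B)ᶜ]) := by
    intro i j hij
    fin_cases i <;> fin_cases j <;> dsimp [Function.onFun] <;>
      first | exact (hij rfl).elim | assumption | exact Disjoint.symm ‹_›
  have hsum := sum_card_interedges_compl_le hdisj hclosed
  simp only [Fin.sum_univ_three, Matrix.cons_val] at hsum
  have := ten_le_sum_card_interedges_compl hAB (Set.toFinset_nonempty.2 C.nonempty_supp)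
    (Set.toFinset_nonempty.2 D.nonempty_supp) hR
  omega

lemma ncard_supp_le_two_or_ncard_supp_le_two (hF : F.ncard ≤ 4)
    {C D : ((BS 3).deleteEdges F).ConnectedComponent} (hCD : C ≠ D) :
    C.supp.ncard ≤ 2 ∨ D.supp.ncard ≤ 2 := by
  classical
  set A := C.supp.toFinset
  have hclosed : ∀ i u v, ((BS 3).deleteEdges F).Adj u v → u ∈ ![A, Aᶜ] i → v ∈ ![A, Aᶜ] i := by
    intro i u v huv
    have hCuv := C.mem_supp_congr_adj huv
    fin_cases i <;> simp [A, hCuv]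
  have hdisj : Pairwise (Function.onFun Disjoint ![A, Aᶜ]) := by
    intro i j hij
    fin_cases i <;> fin_cases j <;> dsimp [Function.onFun] <;>
      first | exact (hij rfl).elim | exact disjoint_compl_right | exact disjoint_compl_left
  have hsum := sum_card_interedges_compl_le hdisj hclosed
  simp only [Fin.sum_univ_two, Matrix.cons_val, compl_compl, card_interedges_comm Aᶜ A] at hsum
  rcases card_le_two_or_card_compl_le_two (by omega : #((BS 3).interedges A Aᶜ) ≤ 4) with h | h
  · left
    rwa [Set.ncard_eq_toFinset_card']
  · right
    refine (Set.ncard_le_ncard (t := ↑(Aᶜ : Finset _)) ?_).trans (by rwa [Set.ncard_coe_finset])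
    intro w hw
    simpa [A, (D.mem_supp_iff w).1 hw] using hCD.symm

end Components

end BS3

theorem BS3_deleteEdges_components_general (F : Set (Sym2 (Equiv.Perm (Fin 3))))
    (hcard : F.ncard ≤ 4)
    (hdisc : ¬ ((BS 3).deleteEdges F).Connected) :
    Nat.card ((BS 3).deleteEdges F).ConnectedComponent = 2 ∧
    ∃ C : ((BS 3).deleteEdges F).ConnectedComponent,
      C.supp.ncard = 1 ∨ C.supp.ncard = 2 := by
  obtain ⟨u, v, huv⟩ : ∃ u v, ¬ ((BS 3).deleteEdges F).Reachable u v := by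
    simpa [connected_iff, Preconnected] using hdisc
  set C := ((BS 3).deleteEdges F).connectedComponentMk u
  set D := ((BS 3).deleteEdges F).connectedComponentMk v
  have hCD : C ≠ D := fun h => huv (ConnectedComponent.exact h)
  refine ⟨Nat.card_eq_two_iff.2 ⟨C, D, hCD, Set.eq_univ_of_forall fun E => ?_⟩, ?_⟩
  · exact BS3.connectedComponent_eq_or_eq_of_ne hcard hCD E
  have hpos : ∀ E : ((BS 3).deleteEdges F).ConnectedComponent, 0 < E.supp.ncard :=
    fun E => E.nonempty_supp.ncard_pos
  rcases BS3.ncard_supp_le_two_or_ncard_supp_le_two hcard hCD with h | h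
  · exact ⟨C, by have := hpos C; omega⟩
  · exact ⟨D, by have := hpos D; omega⟩

/-- If at most `4` edges are deleted from `BS_3` and the result is disconnected, then it has
exactly two connected components, one of which is an isolated vertex or a single edge. -/
theorem BS3_deleteEdges_components (F : Set (Sym2 (Equiv.Perm (Fin 3))))
    (hF : F ⊆ (BS 3).edgeSet) (hcard : F.ncard ≤ 4)
    (hdisc : ¬ ((BS 3).deleteEdges F).Connected) :
    Nat.card ((BS 3).deleteEdges F).ConnectedComponent = 2 ∧
    ∃ C : ((BS 3).deleteEdges F).ConnectedComponent,
      C.supp.ncard = 1 ∨ C.supp.ncard = 2 :=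
  BS3_deleteEdges_components_general F hcard hdisc
end

section
/- Let n ≥ 3 and F_e ⊆ E(BS_n) with |F_e| ≤ 4n − 9. If BS_n − F_e is disconnected, then BS_n − F_e has exactly two connected components, one of which is an isolated vertex. -/
open SimpleGraph

/-!
Every union of components of `BS_n − F` is joined to the remaining vertices by edges of `F`
only. It therefore suffices that every bipartition of the vertices with at least two vertices on
each side is crossed by at least `4n − 8 > |F|` edges of `BS_n`: then no union of components
leaves two vertices on each side, which, as `n! ≥ 4`, forces exactly two components, one of them
a single vertex.

This cut bound is proved by induction on `n`, together with `λ(BS_n) ≥ 2n − 3`. The vertices of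
`BS_{n+1}` with a given last symbol span a copy of `BS_n`; every vertex `x` has its neighbours
`x ∘ (n, n+1)` and `x ∘ (1, n+1)` in two other copies, and any two copies are joined by at least
four edges. A set `S` fills a copy, misses it, or splits it; each split copy contributes
`2n − 3` cut edges by induction, and the edges between copies make up the rest, the number of
split copies deciding which count is needed. The base case `n = 3` is a finite check.
-/

open Finset Equiv

theorem Nat.two_mul_le_factorial {n : ℕ} (hn : 3 ≤ n) : 2 * n ≤ n.factorial := by
  rw [← Nat.mul_factorial_pred (by omega), mul_comm 2]
  exact Nat.mul_le_mul_left n ((by omega : 2 ≤ n - 1).trans (Nat.self_le_factorial _))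

namespace SimpleGraph

variable {V : Type*}

theorem card_connectedComponent_eq_two_of_forall_reachable {G : SimpleGraph V} {x y : V}
    (hxy : ¬ G.Reachable x y) (h : ∀ v, v ≠ y → G.Reachable x v) :
    Nat.card G.ConnectedComponent = 2 ∧ (G.connectedComponentMk y).supp = {y} := by
  refine ⟨Nat.card_eq_two_iff.2 ⟨G.connectedComponentMk x, G.connectedComponentMk y,
    fun hC => hxy (ConnectedComponent.exact hC), ?_⟩, ?_⟩
  · refine Set.eq_univ_of_forall fun C => C.ind fun v => ?_
    by_cases hv : v = y
    · simp [hv]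
    · simp [ConnectedComponent.sound (h v hv).symm]
  · ext v
    simp only [ConnectedComponent.mem_supp_iff, ConnectedComponent.eq, Set.mem_singleton_iff]
    refine ⟨fun hvy => ?_, by rintro rfl; rfl⟩
    by_contra hv
    exact hxy ((h v hv).trans hvy)

variable [Fintype V] [DecidableEq V] (G : SimpleGraph V) [DecidableRel G.Adj]

/-- `G.EdgeCutBound 1 k` says that `G` has edge connectivity at least `k`; with `m = 2` only
cuts leaving at least two vertices on each side are counted. -/
def EdgeCutBound (m k : ℕ) : Prop :=
  ∀ s : Finset V, m ≤ #s → m ≤ #sᶜ → k ≤ #(G.interedges s sᶜ)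

theorem card_interedges_compl (s : Finset V) :
    #(G.interedges sᶜ sᶜᶜ) = #(G.interedges s sᶜ) := by
  have := G.symm
  rw [compl_compl, interedges, interedges, Rel.card_interedges_comm]

theorem card_interedges_le_ncard {F : Set (Sym2 V)} {s : Finset V}
    (hs : ∀ a b, (G.deleteEdges F).Adj a b → a ∈ s → b ∈ s) :
    #(G.interedges s sᶜ) ≤ F.ncard := by
  rw [← Set.ncard_coe_finset]
  refine Set.ncard_le_ncard_of_injOn (fun e => s(e.1, e.2)) (fun e he => ?_) ?_
  · rw [mem_coe, mem_interedges_iff, mem_compl] at he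
    by_contra heF
    exact he.2.1 (hs _ _ (deleteEdges_adj.2 ⟨he.2.2, heF⟩) he.1)
  · intro e he e' he' h
    rw [mem_coe, mem_interedges_iff, mem_compl] at he he'
    rcases Sym2.eq_iff.1 h with ⟨h1, h2⟩ | ⟨h1, -⟩
    · exact Prod.ext h1 h2
    · exact absurd (h1 ▸ he.1) he'.2.1

theorem card_lt_two_or_card_compl_lt_two {μ : ℕ} (hμ : G.EdgeCutBound 2 μ)
    {F : Set (Sym2 V)} (hF : F.ncard < μ) {s : Finset V}
    (hs : ∀ a b, (G.deleteEdges F).Adj a b → a ∈ s → b ∈ s) : #s < 2 ∨ #sᶜ < 2 := by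
  by_contra! h
  exact (hμ s h.1 h.2).not_gt ((G.card_interedges_le_ncard hs).trans_lt hF)

theorem deleteEdges_card_connectedComponent_eq_two {μ : ℕ} (hV : 4 ≤ Fintype.card V)
    (hμ : G.EdgeCutBound 2 μ) {F : Set (Sym2 V)} (hF : F.ncard < μ)
    (hdisc : ¬ (G.deleteEdges F).Connected) :
    Nat.card (G.deleteEdges F).ConnectedComponent = 2 ∧
      ∃ C : (G.deleteEdges F).ConnectedComponent, C.supp.ncard = 1 := by
  classical
  set H := G.deleteEdges F
  have : Nonempty V := Fintype.card_pos_iff.1 (by omega)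
  obtain ⟨x, y, hxy⟩ : ∃ x y, ¬ H.Reachable x y := by
    simpa [connected_iff, Preconnected] using hdisc
  -- the component of `u` either misses only `w` or is `{u}`
  have hcomp : ∀ u w, ¬ H.Reachable u w →
      (∀ v, v ≠ w → H.Reachable u v) ∨ ∀ v, ¬ H.Adj u v := by
    intro u w huw
    set s : Finset V := {v | H.Reachable u v}
    rcases G.card_lt_two_or_card_compl_lt_two hμ hF (s := s) fun a b hab ha => by
        simpa [s] using (mem_filter.1 ha).2.trans hab.reachable with h | h
    · refine .inr fun v huv => huv.ne ?_
      exact card_le_one.1 (by omega : #s ≤ 1) u (by simp [s]) v (by simpa [s] using huv.reachable)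
    · refine .inl fun v hvw => ?_
      by_contra huv
      exact hvw (card_le_one.1 (by omega : #sᶜ ≤ 1) v (by simpa [s] using huv) w
        (by simpa [s] using huw))
  rcases hcomp x y hxy with hx | hx
  · obtain ⟨h2, hy⟩ := card_connectedComponent_eq_two_of_forall_reachable hxy hx
    exact ⟨h2, _, by rw [hy, Set.ncard_singleton]⟩
  rcases hcomp y x (fun h => hxy h.symm) with hy | hy
  · obtain ⟨h2, hx⟩ :=
      card_connectedComponent_eq_two_of_forall_reachable (fun h => hxy h.symm) hy
    exact ⟨h2, _, by rw [hx, Set.ncard_singleton]⟩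
  have hne : x ≠ y := fun h => hxy (h ▸ Reachable.refl x)
  have hclosed : ∀ a b, H.Adj a b → a ∈ ({x, y} : Finset V) → b ∈ ({x, y} : Finset V) :=
    fun a b hab ha => by
    rcases mem_insert.1 ha with rfl | ha
    · exact absurd hab (hx b)
    · exact absurd hab (mem_singleton.1 ha ▸ hy b)
  rcases G.card_lt_two_or_card_compl_lt_two hμ hF hclosed with h | h
  · rw [card_pair hne] at h; omega
  · rw [card_compl, card_pair hne] at h; omega

end SimpleGraph

namespace Equiv.Perm

theorem two_le_card_filter_apply_eq {m : ℕ} (hm : 4 ≤ m) {i j a b : Fin m} (hij : i ≠ j)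
    (hab : a ≠ b) : 2 ≤ #{x : Perm (Fin m) | x i = a ∧ x j = b} := by
  have hja : swap i a j ≠ a := fun h =>
    hij ((swap i a).injective (h.trans (swap_apply_left i a).symm)).symm
  set x := swap (swap i a j) b * swap i a
  have hxi : x i = a := by simp [x, swap_apply_of_ne_of_ne hja.symm hab]
  have hxj : x j = b := by simp [x]
  obtain ⟨k, hk, l, hl, hkl⟩ := one_lt_card.1 (by
    rw [card_compl, Fintype.card_fin, card_pair hij]; omega : 1 < #({i, j}ᶜ : Finset (Fin m)))
  simp only [mem_compl, mem_insert, mem_singleton, not_or] at hk hl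
  refine one_lt_card.2 ⟨x, ?_, x * swap k l, ?_, fun h => hkl (x.injective ?_)⟩
  · simp [hxi, hxj]
  · simp [swap_apply_of_ne_of_ne, hk.1, hk.2, hl.1, hl.2, Ne.symm, hxi, hxj]
  · simpa using congrArg (· k) h

theorem two_mul_card_mul_card_le_card_filter {m : ℕ} (hm : 4 ≤ m) {i j : Fin m} (hij : i ≠ j)
    {A B : Finset (Fin m)} (hAB : _root_.Disjoint A B) :
    2 * (#A * #B) ≤ #{x : Perm (Fin m) | x i ∈ A ∧ x j ∈ B} := by
  calc 2 * (#A * #B) = ∑ _q ∈ A ×ˢ B, 2 := by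
        rw [sum_const, card_product, smul_eq_mul, mul_comm]
    _ ≤ ∑ q ∈ A ×ˢ B, #{x : Perm (Fin m) | x i = q.1 ∧ x j = q.2} := by
      refine sum_le_sum fun q hq => two_le_card_filter_apply_eq hm hij ?_
      rw [mem_product] at hq
      exact disjoint_left.1 hAB hq.1 ∘ (· ▸ hq.2)
    _ = #((A ×ˢ B).biUnion fun q => {x : Perm (Fin m) | x i = q.1 ∧ x j = q.2}) := by
      refine (card_biUnion fun q _ r _ hqr => disjoint_left.2 fun x hq hr => hqr ?_).symm
      simp only [mem_filter, mem_univ, true_and] at hq hr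
      exact Prod.ext (hq.1.symm.trans hr.1) (hq.2.symm.trans hr.2)
    _ ≤ _ := card_le_card <| biUnion_subset.2 fun q hq x hx => by
      simp only [mem_filter, mem_univ, true_and, mem_product] at hq hx ⊢
      exact ⟨hx.1 ▸ hq.1, hx.2 ▸ hq.2⟩

end Equiv.Perm

namespace BS

variable {n : ℕ}

instance : DecidableRel (BS n).Adj := fun x y => by
  unfold BS BSRel; infer_instance

theorem adj_iff {x y : Perm (Fin n)} : (BS n).Adj x y ↔ BSRel n x y := by
  rw [BS, SimpleGraph.fromRel_adj]
  constructor
  · rintro ⟨-, h | ⟨i, j, hc, hij, hx⟩⟩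
    · exact h
    · exact ⟨i, j, hc, hij, by rw [hx, mul_assoc, swap_mul_self, mul_one]⟩
  · rintro ⟨i, j, hc, hij, rfl⟩
    refine ⟨fun h => hij (x.injective ?_), .inl ⟨i, j, hc, hij, rfl⟩⟩
    simpa using congrArg (· i) h

/-- The vertices of `BS (n + 1)` in one cluster span a copy of `BS n`, see `clusterEmb`. -/
def cluster (x : Perm (Fin (n + 1))) : Fin (n + 1) := x (Fin.last n)

def penult (n : ℕ) : Fin (n + 1) := ⟨n - 1, by omega⟩

theorem penult_ne_last (hn : 1 ≤ n) : penult n ≠ Fin.last n := by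
  simp only [penult, ne_eq, Fin.ext_iff, Fin.val_last]; omega

theorem zero_ne_last (hn : 1 ≤ n) : (0 : Fin (n + 1)) ≠ Fin.last n := by
  simp only [ne_eq, Fin.ext_iff, Fin.val_last, Fin.val_zero]; omega

theorem penult_ne_zero (hn : 2 ≤ n) : penult n ≠ 0 := by
  simp only [penult, ne_eq, Fin.ext_iff, Fin.val_zero]; omega

def bubbleLast (n : ℕ) : Perm (Fin (n + 1)) := swap (penult n) (Fin.last n)

def starLast (n : ℕ) : Perm (Fin (n + 1)) := swap 0 (Fin.last n)

theorem adj_mul_bubbleLast (hn : 1 ≤ n) (x : Perm (Fin (n + 1))) :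
    (BS (n + 1)).Adj x (x * bubbleLast n) :=
  adj_iff.2 ⟨_, _, .inl (by simp only [penult, Fin.val_last]; omega), penult_ne_last hn, rfl⟩

theorem adj_mul_starLast (hn : 1 ≤ n) (x : Perm (Fin (n + 1))) :
    (BS (n + 1)).Adj x (x * starLast n) :=
  adj_iff.2 ⟨_, _, .inr rfl, zero_ne_last hn, rfl⟩

theorem cluster_mul_bubbleLast (x : Perm (Fin (n + 1))) :
    cluster (x * bubbleLast n) = x (penult n) := by
  simp [cluster, bubbleLast]

theorem cluster_mul_starLast (x : Perm (Fin (n + 1))) : cluster (x * starLast n) = x 0 := by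
  simp [cluster, starLast]

theorem cluster_mul_bubbleLast_ne (hn : 1 ≤ n) (x : Perm (Fin (n + 1))) :
    cluster (x * bubbleLast n) ≠ cluster x := by
  rw [cluster_mul_bubbleLast, cluster, x.injective.ne_iff]
  exact penult_ne_last hn

theorem cluster_mul_starLast_ne (hn : 1 ≤ n) (x : Perm (Fin (n + 1))) :
    cluster (x * starLast n) ≠ cluster x := by
  rw [cluster_mul_starLast, cluster, x.injective.ne_iff]
  exact zero_ne_last hn

theorem cluster_mul_bubbleLast_ne_starLast (hn : 2 ≤ n) (x : Perm (Fin (n + 1))) :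
    cluster (x * bubbleLast n) ≠ cluster (x * starLast n) := by
  rw [cluster_mul_bubbleLast, cluster_mul_starLast, x.injective.ne_iff]
  exact penult_ne_zero hn

noncomputable def liftPerm : Perm (Fin n) →* Perm (Fin (n + 1)) :=
  Perm.viaEmbeddingHom Fin.castSuccEmb

@[simp]
theorem liftPerm_castSucc (σ : Perm (Fin n)) (i : Fin n) :
    liftPerm σ i.castSucc = (σ i).castSucc :=
  Perm.viaEmbedding_apply σ Fin.castSuccEmb i

@[simp]
theorem liftPerm_last (σ : Perm (Fin n)) : liftPerm σ (Fin.last n) = Fin.last n :=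
  Perm.viaEmbedding_apply_of_notMem σ Fin.castSuccEmb _ fun ⟨i, hi⟩ =>
    (Fin.castSucc_lt_last i).ne hi

theorem liftPerm_swap (i j : Fin n) : liftPerm (swap i j) = swap i.castSucc j.castSucc := by
  ext k
  induction k using Fin.lastCases with
  | last => simp [swap_apply_of_ne_of_ne (Fin.castSucc_lt_last i).ne' (Fin.castSucc_lt_last j).ne']
  | cast k => simp [swap_apply_def, apply_ite Fin.castSucc]

theorem exists_liftPerm_eq {y : Perm (Fin (n + 1))} (hy : y (Fin.last n) = Fin.last n) :
    ∃ σ, liftPerm σ = y := by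
  have hne {z : Perm (Fin (n + 1))} (hz : z (Fin.last n) = Fin.last n) (i : Fin n) :
      z i.castSucc ≠ Fin.last n :=
    fun h => (Fin.castSucc_lt_last i).ne (z.injective (h.trans hz.symm))
  have hy' : y⁻¹ (Fin.last n) = Fin.last n := by rw [Perm.inv_eq_iff_eq, hy]
  refine ⟨⟨fun i => (y i.castSucc).castPred (hne hy i),
    fun i => (y⁻¹ i.castSucc).castPred (hne hy' i), fun i => by simp, fun i => by simp⟩, ?_⟩
  ext k
  induction k using Fin.lastCases with
  | last => simp [hy]
  | cast k => simp

noncomputable def clusterEmb (a : Fin (n + 1)) (σ : Perm (Fin n)) : Perm (Fin (n + 1)) :=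
  swap (Fin.last n) a * liftPerm σ

@[simp]
theorem cluster_clusterEmb (a : Fin (n + 1)) (σ : Perm (Fin n)) :
    cluster (clusterEmb a σ) = a := by
  simp [cluster, clusterEmb]

theorem clusterEmb_injective (a : Fin (n + 1)) : Function.Injective (clusterEmb (n := n) a) :=
  fun _ _ h => Perm.viaEmbeddingHom_injective _ (mul_left_cancel h)

theorem exists_clusterEmb_eq (x : Perm (Fin (n + 1))) : ∃ σ, clusterEmb (cluster x) σ = x := by
  obtain ⟨σ, hσ⟩ :=
    exists_liftPerm_eq (y := swap (Fin.last n) (cluster x) * x) (by simp [cluster])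
  exact ⟨σ, by rw [clusterEmb, hσ, ← mul_assoc, swap_mul_self, one_mul]⟩

theorem adj_clusterEmb {a : Fin (n + 1)} {σ τ : Perm (Fin n)} (h : (BS n).Adj σ τ) :
    (BS (n + 1)).Adj (clusterEmb a σ) (clusterEmb a τ) := by
  obtain ⟨i, j, hc, hij, rfl⟩ := adj_iff.1 h
  refine adj_iff.2 ⟨i.castSucc, j.castSucc, by simpa using hc, by simpa using hij, ?_⟩
  rw [clusterEmb, clusterEmb, map_mul, liftPerm_swap, mul_assoc]

section Clusters

variable (S : Finset (Perm (Fin (n + 1))))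

noncomputable def slice (a : Fin (n + 1)) : Finset (Perm (Fin n)) := {σ | clusterEmb a σ ∈ S}

/-- The clusters disjoint from `S` are `fullClusters Sᶜ`. -/
noncomputable def fullClusters : Finset (Fin (n + 1)) := {a | slice S a = univ}

noncomputable def properClusters : Finset (Fin (n + 1)) :=
  {a | (slice S a).Nonempty ∧ (slice S a)ᶜ.Nonempty}

theorem slice_compl (a : Fin (n + 1)) : slice Sᶜ a = (slice S a)ᶜ := by
  ext; simp [slice]

theorem disjoint_fullClusters_compl : Disjoint (fullClusters S) (fullClusters Sᶜ) := by
  refine disjoint_left.2 fun a ha hac => ?_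
  simp only [fullClusters, mem_filter, mem_univ, true_and, slice_compl, compl_eq_univ_iff] at ha hac
  exact univ_nonempty.ne_empty (ha ▸ hac)

theorem mem_of_cluster_mem_fullClusters {x : Perm (Fin (n + 1))}
    (hx : cluster x ∈ fullClusters S) : x ∈ S := by
  obtain ⟨σ, hσ⟩ := exists_clusterEmb_eq x
  simp only [fullClusters, mem_filter, mem_univ, true_and] at hx
  have hσS : σ ∈ slice S (cluster x) := hx ▸ mem_univ σ
  simpa [slice, hσ] using hσS

theorem cluster_mem_of_mem {x : Perm (Fin (n + 1))} (hx : x ∈ S) :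
    cluster x ∈ fullClusters S ∪ properClusters S := by
  obtain ⟨σ, hσ⟩ := exists_clusterEmb_eq x
  have hσS : σ ∈ slice S (cluster x) := by simp [slice, hσ, hx]
  by_cases h : slice S (cluster x) = univ
  · simp [fullClusters, h]
  · refine mem_union_right _ (mem_filter.2 ⟨mem_univ _, ⟨σ, hσS⟩, ?_⟩)
    rwa [nonempty_iff_ne_empty, Ne, compl_eq_empty_iff]

theorem succ_le_card_fullClusters_add_card_add_card :
    n + 1 ≤ #(fullClusters S) + #(fullClusters Sᶜ) + #(properClusters S) := by
  calc n + 1 = #(univ : Finset (Fin (n + 1))) := by simp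
    _ ≤ #(fullClusters S ∪ fullClusters Sᶜ ∪ properClusters S) := card_le_card fun a _ => by
      by_cases h1 : slice S a = univ
      · simp [fullClusters, h1]
      by_cases h2 : slice S a = ∅
      · simp [fullClusters, slice_compl, h2]
      · simp [properClusters, nonempty_iff_ne_empty, compl_eq_empty_iff, h1, h2]
    _ ≤ _ := (card_union_le _ _).trans (Nat.add_le_add_right (card_union_le _ _) _)

theorem card_slice_of_forall_cluster_eq {a : Fin (n + 1)} (h : ∀ x ∈ S, cluster x = a) :
    #(slice S a) = #S := by
  rw [← card_image_of_injective _ (clusterEmb_injective a)]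
  congr 1
  ext x
  simp only [slice, mem_image, mem_filter, mem_univ, true_and]
  refine ⟨fun ⟨σ, hσ, hσx⟩ => hσx ▸ hσ, fun hx => ?_⟩
  obtain ⟨σ, hσ⟩ := exists_clusterEmb_eq x
  exact ⟨σ, by rw [← h x hx, hσ]; exact hx, by rw [← h x hx, hσ]⟩

theorem exists_properClusters_eq_singleton (hS : S.Nonempty) (hfull : fullClusters S = ∅)
    (hk : #(properClusters S) ≤ 1) :
    ∃ p, properClusters S = {p} ∧ ∀ x ∈ S, cluster x = p := by
  have hmem : ∀ x ∈ S, cluster x ∈ properClusters S := fun x hx => by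
    simpa [hfull] using cluster_mem_of_mem S hx
  obtain ⟨x, hx⟩ := hS
  obtain ⟨p, hp⟩ := card_eq_one.1 (le_antisymm hk (card_pos.2 ⟨_, hmem x hx⟩))
  exact ⟨p, hp, fun y hy => by simpa [hp] using hmem y hy⟩

def crossCut : Finset (Perm (Fin (n + 1)) × Perm (Fin (n + 1))) :=
  {e ∈ (BS (n + 1)).interedges S Sᶜ | cluster e.1 ≠ cluster e.2}

theorem sum_card_interedges_slice_add_card_crossCut_le :
    ∑ a, #((BS n).interedges (slice S a) (slice S a)ᶜ) + #(crossCut S) ≤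
      #((BS (n + 1)).interedges S Sᶜ) := by
  set inner : Fin (n + 1) → Finset (Perm (Fin (n + 1)) × Perm (Fin (n + 1))) := fun a =>
    ((BS n).interedges (slice S a) (slice S a)ᶜ).image (Prod.map (clusterEmb a) (clusterEmb a))
  have hcl : ∀ a, ∀ e ∈ inner a, cluster e.1 = a ∧ cluster e.2 = a := by
    intro a e he
    obtain ⟨⟨σ, τ⟩, -, rfl⟩ := mem_image.1 he
    simp
  have hdisj : Disjoint (univ.biUnion inner) (crossCut S) := by
    refine disjoint_left.2 fun e he hc => (mem_filter.1 hc).2 ?_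
    obtain ⟨a, -, he⟩ := mem_biUnion.1 he
    rw [(hcl a e he).1, (hcl a e he).2]
  calc _ = #(univ.biUnion inner ∪ crossCut S) := by
        rw [card_union_of_disjoint hdisj, card_biUnion fun a _ b _ hab => disjoint_left.2
          fun e ha hb => hab ((hcl a e ha).1.symm.trans (hcl b e hb).1)]
        congr 1
        exact sum_congr rfl fun a _ => (card_image_of_injective _
          ((clusterEmb_injective a).prodMap (clusterEmb_injective a))).symm
    _ ≤ _ := by
      refine card_le_card (union_subset (biUnion_subset.2 fun a _ e he => ?_) (filter_subset _ _))
      obtain ⟨⟨σ, τ⟩, hστ, rfl⟩ := mem_image.1 he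
      rw [mem_interedges_iff] at hστ ⊢
      simp only [slice, mem_compl, mem_filter, mem_univ, true_and] at hστ
      exact ⟨hστ.1, mem_compl.2 hστ.2.1, adj_clusterEmb hστ.2.2⟩

theorem card_properClusters_mul_add_card_crossCut_le
    (hlam : (BS n).EdgeCutBound 1 (2 * n - 3)) :
    #(properClusters S) * (2 * n - 3) + #(crossCut S) ≤ #((BS (n + 1)).interedges S Sᶜ) := by
  refine le_trans (Nat.add_le_add_right ?_ _) (sum_card_interedges_slice_add_card_crossCut_le S)
  calc #(properClusters S) * (2 * n - 3) = ∑ _a ∈ properClusters S, (2 * n - 3) := by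
        rw [sum_const, smul_eq_mul]
    _ ≤ ∑ a ∈ properClusters S, #((BS n).interedges (slice S a) (slice S a)ᶜ) :=
      sum_le_sum fun a ha => by
        simp only [properClusters, mem_filter, mem_univ, true_and] at ha
        exact hlam _ (card_pos.2 ha.1) (card_pos.2 ha.2)
    _ ≤ _ := sum_le_sum_of_subset (subset_univ _)

end Clusters

section Cross

variable (S : Finset (Perm (Fin (n + 1))))

theorem card_filter_add_card_filter_le_card_crossCut (hn : 2 ≤ n) :
    #{x ∈ S | x * bubbleLast n ∉ S} + #{x ∈ S | x * starLast n ∉ S} ≤ #(crossCut S) := by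
  set f := fun x : Perm (Fin (n + 1)) => (x, x * bubbleLast n)
  set g := fun x : Perm (Fin (n + 1)) => (x, x * starLast n)
  have hdisj : Disjoint ({x ∈ S | x * bubbleLast n ∉ S}.image f)
      ({x ∈ S | x * starLast n ∉ S}.image g) := by
    refine disjoint_left.2 fun e hf hg => ?_
    obtain ⟨x, -, rfl⟩ := mem_image.1 hf
    obtain ⟨y, -, hy⟩ := mem_image.1 hg
    obtain ⟨rfl, h⟩ := Prod.ext_iff.1 hy
    exact cluster_mul_bubbleLast_ne_starLast hn y (congrArg cluster h).symm
  rw [← card_image_of_injective _ fun x y (h : f x = f y) => congrArg Prod.fst h,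
    ← card_image_of_injective _ fun x y (h : g x = g y) => congrArg Prod.fst h,
    ← card_union_of_disjoint hdisj]
  refine card_le_card (union_subset ?_ ?_) <;> intro e he <;>
    obtain ⟨x, hx, rfl⟩ := mem_image.1 he <;> rw [mem_filter] at hx <;>
    simp only [crossCut, mem_filter, mk_mem_interedges_iff, mem_compl, f, g]
  · exact ⟨⟨hx.1, hx.2, adj_mul_bubbleLast (by omega) x⟩,
      (cluster_mul_bubbleLast_ne (by omega) x).symm⟩
  · exact ⟨⟨hx.1, hx.2, adj_mul_starLast (by omega) x⟩,
      (cluster_mul_starLast_ne (by omega) x).symm⟩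

theorem two_mul_card_le_card_crossCut (hn : 2 ≤ n) {p : Fin (n + 1)}
    (h : ∀ x ∈ S, cluster x = p) : 2 * #S ≤ #(crossCut S) := by
  have hout : ∀ {g : Perm (Fin (n + 1))}, (∀ x, cluster (x * g) ≠ cluster x) →
      {x ∈ S | x * g ∉ S} = S := fun hg =>
    filter_true_of_mem fun x hx hgx => hg x (by rw [h x hx, h _ hgx])
  have := card_filter_add_card_filter_le_card_crossCut S hn
  rw [hout (cluster_mul_bubbleLast_ne (by omega)), hout (cluster_mul_starLast_ne (by omega))]
    at this
  omega

theorem card_le_card_crossCut (hn : 2 ≤ n) {P : Finset (Fin (n + 1))} (hP : #P ≤ 2)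
    (h : ∀ x ∈ S, cluster x ∈ P) : #S ≤ #(crossCut S) := by
  refine le_trans (card_le_card fun x hx => ?_) ((card_union_le _ _).trans
    (card_filter_add_card_filter_le_card_crossCut S hn))
  by_contra hx'
  simp only [mem_union, mem_filter, not_or, not_and, not_not] at hx'
  have h3 : #{cluster x, cluster (x * bubbleLast n), cluster (x * starLast n)} = 3 :=
    card_eq_three.2 ⟨_, _, _, (cluster_mul_bubbleLast_ne (by omega) x).symm,
      (cluster_mul_starLast_ne (by omega) x).symm, cluster_mul_bubbleLast_ne_starLast hn x, rfl⟩
  have := card_le_card (s := {cluster x, cluster (x * bubbleLast n), cluster (x * starLast n)})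
    (t := P) (by simp [insert_subset_iff, h x hx, h _ (hx'.1 hx), h _ (hx'.2 hx)])
  omega

theorem four_mul_card_mul_card_le_card_crossCut (hn : 3 ≤ n) :
    4 * (#(fullClusters S) * #(fullClusters Sᶜ)) ≤ #(crossCut S) := by
  have hsub : ∀ (j : Fin (n + 1)) (g : Perm (Fin (n + 1))), (∀ x, cluster (x * g) = x j) →
      ({x | x (Fin.last n) ∈ fullClusters S ∧ x j ∈ fullClusters Sᶜ} : Finset _) ⊆
        {x ∈ S | x * g ∉ S} := fun j g hg x hx => by
    simp only [mem_filter, mem_univ, true_and] at hx ⊢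
    refine ⟨mem_of_cluster_mem_fullClusters S hx.1, ?_⟩
    rw [← mem_compl]
    exact mem_of_cluster_mem_fullClusters Sᶜ (by rw [hg]; exact hx.2)
  have hbubble := Perm.two_mul_card_mul_card_le_card_filter (by omega)
    (penult_ne_last (by omega)).symm (disjoint_fullClusters_compl S)
  have hstar := Perm.two_mul_card_mul_card_le_card_filter (by omega)
    (zero_ne_last (by omega)).symm (disjoint_fullClusters_compl S)
  have := card_le_card (hsub _ _ cluster_mul_bubbleLast)
  have := card_le_card (hsub _ _ cluster_mul_starLast)
  have := card_filter_add_card_filter_le_card_crossCut S (by omega)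
  omega

end Cross

theorem le_card_mul_card_add_card_properClusters (S : Finset (Perm (Fin (n + 1))))
    (hA : (fullClusters S).Nonempty) (hB : (fullClusters Sᶜ).Nonempty) :
    n ≤ #(fullClusters S) * #(fullClusters Sᶜ) + #(properClusters S) := by
  have := succ_le_card_fullClusters_add_card_add_card S
  have := card_pos.2 hA
  have := card_pos.2 hB
  nlinarith

theorem edgeCutBound_one_succ (hn : 3 ≤ n) (hlam : (BS n).EdgeCutBound 1 (2 * n - 3)) :
    (BS (n + 1)).EdgeCutBound 1 (2 * (n + 1) - 3) := by
  intro S hS hSc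
  -- passing to `Sᶜ` keeps the cut and exchanges the full and the empty clusters
  wlog hsymm : fullClusters Sᶜ = ∅ → fullClusters S = ∅ generalizing S
  · rw [← card_interedges_compl]
    exact this Sᶜ hSc (by rwa [compl_compl]) (by simp_all)
  have hcut := card_properClusters_mul_add_card_crossCut_le S hlam
  obtain hk | hk := le_or_gt 2 #(properClusters S)
  · have := Nat.mul_le_mul_right (2 * n - 3) hk
    omega
  obtain hA | hA := (fullClusters S).eq_empty_or_nonempty
  · obtain ⟨p, hp, hSp⟩ := exists_properClusters_eq_singleton S (card_pos.1 hS) hA (by omega)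
    have := two_mul_card_le_card_crossCut S (by omega) hSp
    rw [hp, card_singleton] at hcut
    omega
  · have hB := nonempty_iff_ne_empty.2 (mt hsymm hA.ne_empty)
    have := le_card_mul_card_add_card_properClusters S hA hB
    have := four_mul_card_mul_card_le_card_crossCut S hn
    interval_cases #(properClusters S) <;> omega

theorem edgeCutBound_two_succ (hn : 3 ≤ n) (hlam : (BS n).EdgeCutBound 1 (2 * n - 3))
    (hstar : (BS n).EdgeCutBound 2 (4 * n - 8)) :
    (BS (n + 1)).EdgeCutBound 2 (4 * (n + 1) - 8) := by
  intro S hS hSc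
  wlog hsymm : fullClusters Sᶜ = ∅ → fullClusters S = ∅ generalizing S
  · rw [← card_interedges_compl]
    exact this Sᶜ hSc (by rwa [compl_compl]) (by simp_all)
  have hcut := card_properClusters_mul_add_card_crossCut_le S hlam
  obtain hk | hk := le_or_gt 3 #(properClusters S)
  · have := Nat.mul_le_mul_right (2 * n - 3) hk
    omega
  obtain hA | hA := (fullClusters S).eq_empty_or_nonempty
  · obtain hk | hk := (Nat.lt_succ_iff.1 hk).lt_or_eq
    · obtain ⟨p, hp, hSp⟩ := exists_properClusters_eq_singleton S (card_pos.1 (by omega)) hA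
        (by omega)
      have hslice := card_slice_of_forall_cluster_eq S hSp
      have := two_mul_card_le_card_crossCut S (by omega) hSp
      obtain hc | hc := le_or_gt 2 #(slice S p)ᶜ
      · have := hstar _ (hslice ▸ hS) hc
        have := single_le_sum (fun a _ => Nat.zero_le
          #((BS n).interedges (slice S a) (slice S a)ᶜ)) (mem_univ p)
        have := sum_card_interedges_slice_add_card_crossCut_le S
        omega
      · -- now `#S = n! - 1`, and the edges leaving the cluster suffice
        rw [card_compl, Fintype.card_perm, Fintype.card_fin, hslice] at hc
        have := Nat.two_mul_le_factorial hn
        omega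
    · have := card_le_card_crossCut S (by omega) hk.le fun x hx => by
        simpa [hA] using cluster_mem_of_mem S hx
      rw [hk] at hcut
      omega
  · have hB := nonempty_iff_ne_empty.2 (mt hsymm hA.ne_empty)
    have := le_card_mul_card_add_card_properClusters S hA hB
    have := four_mul_card_mul_card_le_card_crossCut S hn
    have := Nat.mul_pos (card_pos.2 hA) (card_pos.2 hB)
    interval_cases #(properClusters S) <;> omega

theorem edgeCutBound (hn : 3 ≤ n) :
    (BS n).EdgeCutBound 1 (2 * n - 3) ∧ (BS n).EdgeCutBound 2 (4 * n - 8) := by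
  induction n, hn using Nat.le_induction with
  | base => exact ⟨by unfold EdgeCutBound; decide, by unfold EdgeCutBound; decide⟩
  | succ n hn ih => exact ⟨edgeCutBound_one_succ hn ih.1, edgeCutBound_two_succ hn ih.1 ih.2⟩

end BS

theorem BS_deleteEdges_isolated_vertex_general (n : ℕ) (hn : 3 ≤ n)
    (F : Set (Sym2 (Equiv.Perm (Fin n))))
    (hcard : F.ncard ≤ 4 * n - 9) (hdisc : ¬ ((BS n).deleteEdges F).Connected) :
    Nat.card ((BS n).deleteEdges F).ConnectedComponent = 2 ∧
    ∃ C : ((BS n).deleteEdges F).ConnectedComponent, C.supp.ncard = 1 := by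
  refine (BS n).deleteEdges_card_connectedComponent_eq_two ?_ (BS.edgeCutBound hn).2 ?_ hdisc
  · have := Nat.two_mul_le_factorial hn
    rw [Fintype.card_perm, Fintype.card_fin]
    omega
  · omega

/-- For `n ≥ 3`, if at most `4n - 9` edges are deleted from `BS_n` and the result is
disconnected, then it has exactly two components, one of which is an isolated vertex. -/
theorem BS_deleteEdges_isolated_vertex (n : ℕ) (hn : 3 ≤ n)
    (F : Set (Sym2 (Equiv.Perm (Fin n)))) (hF : F ⊆ (BS n).edgeSet)
    (hcard : F.ncard ≤ 4 * n - 9) (hdisc : ¬ ((BS n).deleteEdges F).Connected) :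
    Nat.card ((BS n).deleteEdges F).ConnectedComponent = 2 ∧
    ∃ C : ((BS n).deleteEdges F).ConnectedComponent, C.supp.ncard = 1 :=
  BS_deleteEdges_isolated_vertex_general n hn F hcard hdisc
end

section
/- The edge connectivity of the n-dimensional bubble-sort star graph BS_n equals 2n − 3 for n ≥ 3. -/
open SimpleGraph

/-- The edge connectivity of a graph: the minimum size of a set of edges whose
removal disconnects the graph. -/
noncomputable def edgeConnectivity {V : Type*} (G : SimpleGraph V) : ℕ :=
  sInf {k : ℕ | ∃ F : Set (Sym2 V), F ⊆ G.edgeSet ∧ F.ncard = k ∧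
    ¬ (G.deleteEdges F).Connected}


/-
`BS n` is the Cayley graph of `Perm (Fin n)` for a generating set `S` of `2n - 3` transpositions,
so removing the `2n - 3` edges at one vertex disconnects it. Conversely, by vertex-transitivity it
suffices to join `1` and each `s ∈ S` by `|S|` edge-disjoint walks: the edge `{1, s}`, and for each
`t ∈ S \ {s}` the square `1, t, ts, s` when `sts ∈ S`, otherwise the hexagon `1, t, ts, tst, st, s`
(then `s` and `t` do not commute, so they satisfy the braid relation `tst = sts`). No two of
these walks share an inner vertex, so fewer than `|S|` deleted edges leave one of them intact, and
every edge of `BS n` survives as a walk.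
-/

open Equiv

namespace Equiv.Perm

variable {α : Type*} [DecidableEq α] {s t : Perm α}

theorem IsSwap.ne_one (hs : s.IsSwap) : s ≠ 1 := by
  obtain ⟨a, b, hab, rfl⟩ := hs
  exact swap_eq_one_iff.not.mpr hab

theorem IsSwap.mul_self (hs : s.IsSwap) : s * s = 1 := by
  obtain ⟨a, b, -, rfl⟩ := hs
  exact swap_mul_self a b

theorem IsSwap.inv_eq (hs : s.IsSwap) : s⁻¹ = s := by
  obtain ⟨a, b, -, rfl⟩ := hs
  exact swap_inv a b

theorem IsSwap.mul_mul_self (hs : s.IsSwap) (x : Perm α) : s * (s * x) = x := by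
  rw [← mul_assoc, hs.mul_self, one_mul]

theorem IsSwap.conj_swap (hs : s.IsSwap) (c d : α) : s * swap c d * s = swap (s c) (s d) := by
  obtain ⟨a, b, -, rfl⟩ := hs
  rw [swap_apply_apply, swap_inv]

theorem IsSwap.braid (hs : s.IsSwap) (ht : t.IsSwap) (h : s * t * s ≠ t) :
    t * s * t = s * t * s := by
  obtain ⟨a, b, hab, rfl⟩ := hs
  obtain ⟨c, d, hcd, rfl⟩ := ht
  rw [IsSwap.conj_swap ⟨a, b, hab, rfl⟩] at h ⊢
  rw [IsSwap.conj_swap ⟨c, d, hcd, rfl⟩]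
  by_cases hac : a = c <;> by_cases had : a = d <;> by_cases hbc : b = c <;> by_cases hbd : b = d <;>
    simp_all [swap_apply_def, swap_comm, eq_comm]

end Equiv.Perm

namespace SimpleGraph

section EdgeDisjointWalks

variable {V : Type*} {G : SimpleGraph V}

theorem Walk.edges_disjoint_of_forall_exists_mem {u v : V} {p q : G.Walk u v} {I : Set V}
    (hp : ∀ e ∈ p.edges, ∃ x ∈ e, x ∈ I) (hq : ∀ x ∈ q.support, x ∉ I) :
    p.edges.Disjoint q.edges := fun e hep heq ↦ by
  obtain ⟨x, hxe, hxI⟩ := hp e hep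
  exact hq x (Walk.mem_support_of_mem_edges heq hxe) hxI

theorem Embedding.pairwise_disjoint_edges_map {W : Type*} {H : SimpleGraph W} (f : G ↪g H)
    {ι : Type*} {u v : V} {P : ι → G.Walk u v}
    (hP : Pairwise fun i j ↦ (P i).edges.Disjoint (P j).edges) :
    Pairwise fun i j ↦ ((P i).map f.toHom).edges.Disjoint ((P j).map f.toHom).edges :=
  fun i j hij ↦ by
    simpa only [Walk.edges_map, Embedding.coe_toHom] using
      (hP hij).map (Sym2.map.injective f.injective)

theorem connected_deleteEdges_of_edgeDisjoint_walks [Finite V] {ι : Type*} (hG : G.Connected)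
    (hP : ∀ x y, G.Adj x y → ∃ P : ι → G.Walk x y,
      Pairwise fun i j ↦ (P i).edges.Disjoint (P j).edges)
    {F : Set (Sym2 V)} (hF : F.ncard < Nat.card ι) : (G.deleteEdges F).Connected := by
  have hadj : ∀ x y, G.Adj x y → (G.deleteEdges F).Reachable x y := by
    intro x y hxy
    obtain ⟨P, hP⟩ := hP x y hxy
    obtain ⟨i, hi⟩ : ∃ i, ∀ e ∈ (P i).edges, e ∉ F := by
      by_contra! h
      choose f hfP hfF using h
      have hinj : Function.Injective fun i ↦ (⟨f i, hfF i⟩ : F) := fun i j hij ↦ by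
        by_contra hne
        exact hP hne (hfP i) (by rw [show f i = f j from congrArg Subtype.val hij]; exact hfP j)
      have := Nat.card_le_card_of_injective _ hinj
      rw [Nat.card_coe_set_eq] at this
      omega
    exact ⟨(P i).toDeleteEdges F hi⟩
  refine (connected_iff _).mpr ⟨fun x y ↦ ?_, hG.nonempty⟩
  simp only [reachable_iff_reflTransGen] at hadj ⊢
  exact Relation.ReflTransGen.lift' id hadj _ _ ((reachable_iff_reflTransGen x y).mp (hG x y))

theorem not_connected_deleteEdges_incidenceSet {v w : V} (hvw : v ≠ w) :
    ¬ (G.deleteEdges (G.incidenceSet v)).Connected := by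
  intro h
  obtain ⟨p⟩ := h v w
  cases p with
  | nil => exact hvw rfl
  | cons hadj _ =>
    rw [deleteEdges_adj] at hadj
    exact hadj.2 ⟨hadj.1, Sym2.mem_mk_left _ _⟩

end EdgeDisjointWalks

section Cayley

variable {M : Type*} [Group M] {S : Set M}

theorem mulCayley_adj_of_mul_eq {g x y : M} (hg : g ∈ S) (hg1 : g ≠ 1) (h : x * g = y) :
    (mulCayley S).Adj x y :=
  (mulCayley_adj' S x y).mpr ⟨fun hxy ↦ hg1 (mul_eq_left.mp (h.trans hxy.symm)), g, hg, .inl h⟩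

theorem mulCayley_connected (hS : Submonoid.closure S = ⊤) : (mulCayley S).Connected := by
  have h1 : ∀ x, (mulCayley S).Reachable 1 x := fun x ↦ by
    induction x using Submonoid.induction_of_closure_eq_top_right hS with
    | one => rfl
    | mul_right x g hg ih =>
      by_cases hg1 : g = 1
      · simpa [hg1] using ih
      · exact ih.trans (mulCayley_adj_of_mul_eq hg hg1 rfl).reachable
  exact (connected_iff _).mpr ⟨fun x y ↦ (h1 x).symm.trans (h1 y), ⟨1⟩⟩

theorem mulCayley_neighborSet_one (hS : ∀ g ∈ S, g⁻¹ ∈ S) (hS1 : 1 ∉ S) :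
    (mulCayley S).neighborSet 1 = S := by
  ext g
  simp only [mem_neighborSet, mulCayley_adj, inv_one, one_mul, mul_one]
  constructor
  · rintro ⟨-, hg | hg⟩
    · exact hg
    · simpa using hS _ hg
  · exact fun hg ↦ ⟨fun h ↦ hS1 (h ▸ hg), .inl hg⟩

def mulCayleyMulLeft (a : M) : mulCayley S ↪g mulCayley S where
  toEmbedding := mulLeftEmbedding a
  map_rel_iff' := mulCayley_adj_mul_iff_right

@[simp]
theorem mulCayleyMulLeft_apply (a x : M) : mulCayleyMulLeft (S := S) a x = a * x := rfl

theorem mulCayley_exists_edgeDisjoint_walks {ι : Type*}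
    (h : ∀ g ∈ S, ∃ P : ι → (mulCayley S).Walk 1 g,
      Pairwise fun i j ↦ (P i).edges.Disjoint (P j).edges)
    {x y : M} (hxy : (mulCayley S).Adj x y) :
    ∃ P : ι → (mulCayley S).Walk x y, Pairwise fun i j ↦ (P i).edges.Disjoint (P j).edges := by
  have translate : ∀ x y, x⁻¹ * y ∈ S → ∃ P : ι → (mulCayley S).Walk x y,
      Pairwise fun i j ↦ (P i).edges.Disjoint (P j).edges := fun x y hxy ↦ by
    obtain ⟨P, hP⟩ := h _ hxy
    let f := mulCayleyMulLeft (S := S) x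
    exact ⟨fun i ↦ ((P i).map f.toHom).copy (by simp [f]) (by simp [f]),
      fun i j hij ↦ by simpa using f.pairwise_disjoint_edges_map hP hij⟩
  rcases ((mulCayley_adj S x y).mp hxy).2 with hg | hg
  · exact translate x y hg
  · obtain ⟨P, hP⟩ := translate y x hg
    exact ⟨fun i ↦ (P i).reverse, fun i j hij ↦ by simpa using hP hij⟩

end Cayley

end SimpleGraph

section EdgeConnectivity

variable {V : Type*} {G : SimpleGraph V}

theorem edgeConnectivity_le_deg {v w : V} (hvw : v ≠ w) : edgeConnectivity G ≤ deg G v := by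
  classical
  refine Nat.sInf_le ⟨G.incidenceSet v, G.incidenceSet_subset v, ?_,
    not_connected_deleteEdges_incidenceSet hvw⟩
  rw [deg, ← Nat.card_coe_set_eq, Nat.card_congr (G.incidenceSetEquivNeighborSet v),
    Nat.card_coe_set_eq]

theorem le_edgeConnectivity {v w : V} (hvw : v ≠ w) {m : ℕ}
    (hm : ∀ F ⊆ G.edgeSet, F.ncard < m → (G.deleteEdges F).Connected) :
    m ≤ edgeConnectivity G := by
  obtain ⟨F, hFG, hFm, hF⟩ := Nat.sInf_mem (s := {k | ∃ F : Set (Sym2 V), F ⊆ G.edgeSet ∧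
    F.ncard = k ∧ ¬ (G.deleteEdges F).Connected})
    ⟨_, G.incidenceSet v, G.incidenceSet_subset v, rfl, not_connected_deleteEdges_incidenceSet hvw⟩
  by_contra! h
  exact hF (hm F hFG (hFm ▸ h))

end EdgeConnectivity

section Transpositions

open Equiv.Perm SimpleGraph

variable {α : Type*} [DecidableEq α] {S : Set (Perm α)} {s t : Perm α}

section Walks

variable (hS : ∀ g ∈ S, g.IsSwap)
include hS

theorem mulCayley_adj_of_isSwap {g x y : Perm α} (hg : g ∈ S) (h : x * g = y) :
    (mulCayley S).Adj x y :=
  mulCayley_adj_of_mul_eq hg (hS g hg).ne_one h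

def squareWalk (hs : s ∈ S) (ht : t ∈ S) (hst : s * t * s ∈ S) : (mulCayley S).Walk 1 s :=
  .cons (mulCayley_adj_of_isSwap hS ht (one_mul t)) <|
  .cons (mulCayley_adj_of_isSwap hS hs rfl) <|
  .cons (mulCayley_adj_of_isSwap hS hst (by
    simp only [mul_assoc, (hS s hs).mul_mul_self, (hS t ht).mul_mul_self])) .nil

def hexagonWalk (hs : s ∈ S) (ht : t ∈ S) (hst : s * t * s ∉ S) : (mulCayley S).Walk 1 s :=
  .cons (mulCayley_adj_of_isSwap hS ht (one_mul t)) <|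
  .cons (mulCayley_adj_of_isSwap hS hs rfl) <|
  .cons (mulCayley_adj_of_isSwap hS ht rfl) <|
  .cons (mulCayley_adj_of_isSwap hS hs (y := s * t) (by
    rw [(hS s hs).braid (hS t ht) fun h ↦ hst (by rwa [h])]
    simp only [mul_assoc, (hS s hs).mul_self, mul_one])) <|
  .cons (mulCayley_adj_of_isSwap hS ht (by simp only [mul_assoc, (hS t ht).mul_self, mul_one]))
  .nil

open Classical in
noncomputable def familyWalk (hs : s ∈ S) (t : S) : (mulCayley S).Walk 1 s :=
  if t.1 = s then (mulCayley_adj_of_isSwap hS hs (one_mul s)).toWalk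
  else if hst : s * t * s ∈ S then squareWalk hS hs t.2 hst else hexagonWalk hS hs t.2 hst

end Walks

variable [Fintype α]

/- For `t ∈ S \ {s}`, `walkLabel S s` maps every inner vertex of `familyWalk t` to `t` and the
ends `1`, `s` to `s`: it reads `t` off an odd vertex `t ∈ S` or `tst = sts ∉ S`, and off an even
vertex `ts` or `st`, which are told apart by whether `x * s ∈ S`. -/
open Classical in
noncomputable def walkLabel (S : Set (Perm α)) (s x : Perm α) : Perm α :=
  if sign x = -1 then (if x ∈ S then x else s * x * s) else if x * s ∈ S then x * s else s * x

theorem walkLabel_one (hs : s ∈ S) : walkLabel S s 1 = s := by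
  simp [walkLabel, hs]

variable (hS : ∀ g ∈ S, g.IsSwap)
include hS

theorem walkLabel_of_mem (hx : t ∈ S) : walkLabel S s t = t := by
  simp [walkLabel, (hS t hx).sign_eq, hx]

theorem walkLabel_mul (hs : s ∈ S) (ht : t ∈ S) : walkLabel S s (t * s) = t := by
  simp [walkLabel, (hS t ht).sign_eq, (hS s hs).sign_eq, mul_assoc, (hS s hs).mul_self, ht]

theorem walkLabel_mul_mul (hs : s ∈ S) (ht : t ∈ S) (hst : s * t * s ∉ S) :
    walkLabel S s (t * s * t) = t := by
  have hbraid := (hS s hs).braid (hS t ht) fun h ↦ hst (by rwa [h])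
  rw [walkLabel, if_pos (by simp [(hS t ht).sign_eq, (hS s hs).sign_eq]), hbraid, if_neg hst]
  simp only [mul_assoc, (hS s hs).mul_self, (hS s hs).mul_mul_self, mul_one]

theorem walkLabel_self_mul (hs : s ∈ S) (ht : t ∈ S) (hst : s * t * s ∉ S) :
    walkLabel S s (s * t) = t := by
  rw [walkLabel, if_neg (by simp [(hS t ht).sign_eq, (hS s hs).sign_eq]), if_neg hst,
    (hS s hs).mul_mul_self]

theorem walkLabel_of_mem_support_familyWalk (hs : s ∈ S) (t : S) {x : Perm α}
    (hx : x ∈ (familyWalk hS hs t).support) : walkLabel S s x = t ∨ walkLabel S s x = s := by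
  unfold familyWalk at hx
  split_ifs at hx with hts hst
  · simp only [Walk.support_cons, Walk.support_nil, List.mem_cons, List.not_mem_nil,
      or_false] at hx
    rcases hx with rfl | rfl <;> simp [walkLabel_one hs, walkLabel_of_mem hS hs]
  · simp only [squareWalk, Walk.support_cons, Walk.support_nil, List.mem_cons,
      List.not_mem_nil, or_false] at hx
    rcases hx with rfl | rfl | rfl | rfl <;>
      simp [walkLabel_one hs, walkLabel_of_mem hS hs, walkLabel_of_mem hS t.2,
        walkLabel_mul hS hs t.2]
  · simp only [hexagonWalk, Walk.support_cons, Walk.support_nil, List.mem_cons,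
      List.not_mem_nil, or_false] at hx
    rcases hx with rfl | rfl | rfl | rfl | rfl | rfl <;>
      simp [walkLabel_one hs, walkLabel_of_mem hS hs, walkLabel_of_mem hS t.2,
        walkLabel_mul hS hs t.2, walkLabel_mul_mul hS hs t.2 hst, walkLabel_self_mul hS hs t.2 hst]

theorem exists_walkLabel_eq_of_mem_edges_familyWalk (hs : s ∈ S) {t : S} (hts : t.1 ≠ s)
    {e : Sym2 (Perm α)} (he : e ∈ (familyWalk hS hs t).edges) :
    ∃ x ∈ e, walkLabel S s x = t := by
  unfold familyWalk at he
  split_ifs at he with hts' hst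
  · exact absurd hts' hts
  · simp only [squareWalk, Walk.edges_cons, Walk.edges_nil, List.mem_cons, List.not_mem_nil,
      or_false] at he
    rcases he with rfl | rfl | rfl <;>
      simp [walkLabel_of_mem hS t.2, walkLabel_mul hS hs t.2]
  · simp only [hexagonWalk, Walk.edges_cons, Walk.edges_nil, List.mem_cons, List.not_mem_nil,
      or_false] at he
    rcases he with rfl | rfl | rfl | rfl | rfl <;>
      simp [walkLabel_of_mem hS t.2, walkLabel_mul hS hs t.2, walkLabel_mul_mul hS hs t.2 hst,
        walkLabel_self_mul hS hs t.2 hst]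

theorem pairwise_disjoint_edges_familyWalk (hs : s ∈ S) :
    Pairwise fun t t' : S ↦ (familyWalk hS hs t).edges.Disjoint (familyWalk hS hs t').edges := by
  have key : ∀ t t' : S, t ≠ t' → t.1 ≠ s →
      (familyWalk hS hs t).edges.Disjoint (familyWalk hS hs t').edges := by
    intro t t' htt' hts
    refine Walk.edges_disjoint_of_forall_exists_mem (I := {x | walkLabel S s x = t})
      (fun e he ↦ exists_walkLabel_eq_of_mem_edges_familyWalk hS hs hts he) fun x hx hxt ↦ ?_
    rcases walkLabel_of_mem_support_familyWalk hS hs t' hx with h | h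
    · exact htt' (Subtype.ext (hxt.symm.trans h))
    · exact hts (hxt.symm.trans h)
  intro t t' htt'
  by_cases hts : t.1 = s
  · exact (key t' t htt'.symm fun h ↦ htt' (Subtype.ext (hts.trans h.symm))).symm
  · exact key t t' htt' hts

theorem edgeConnectivity_mulCayley_of_isSwap (hcl : Submonoid.closure S = ⊤) (hne : S.Nonempty) :
    edgeConnectivity (mulCayley S) = S.ncard := by
  obtain ⟨s, hs⟩ := hne
  have h1s : (1 : Perm α) ≠ s := (hS s hs).ne_one.symm
  refine le_antisymm ((edgeConnectivity_le_deg h1s).trans_eq ?_) (le_edgeConnectivity h1s ?_)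
  · rw [deg, mulCayley_neighborSet_one (fun g hg ↦ by rwa [(hS g hg).inv_eq])
      fun h ↦ (hS 1 h).ne_one rfl]
  · intro F _ hF
    refine connected_deleteEdges_of_edgeDisjoint_walks (mulCayley_connected hcl)
      (fun _ _ hxy ↦ mulCayley_exists_edgeDisjoint_walks
        (fun s hs ↦ ⟨familyWalk hS hs, pairwise_disjoint_edges_familyWalk hS hs⟩) hxy) ?_
    rwa [Nat.card_coe_set_eq]

end Transpositions

def bsGens (n : ℕ) : Set (Perm (Fin n)) :=
  {g | ∃ i j : Fin n, (j.val = i.val + 1 ∨ i.val = 0) ∧ i ≠ j ∧ swap i j = g}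

theorem BS_eq_mulCayley (n : ℕ) : BS n = mulCayley (bsGens n) := by
  unfold BS mulCayley
  congr
  ext x y
  simp only [BSRel, bsGens]
  aesop

theorem isSwap_of_mem_bsGens {n : ℕ} {g : Perm (Fin n)} (hg : g ∈ bsGens n) : g.IsSwap := by
  obtain ⟨i, j, -, hij, rfl⟩ := hg
  exact ⟨i, j, hij, rfl⟩

theorem closure_bsGens (n : ℕ) : Submonoid.closure (bsGens n) = ⊤ := by
  cases n with
  | zero => exact Subsingleton.elim _ _
  | succ m =>
    refine top_unique ((Perm.mclosure_swap_castSucc_succ m).symm.trans_le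
      (Submonoid.closure_mono ?_))
    rintro _ ⟨i, rfl⟩
    exact ⟨i.castSucc, i.succ, .inl (by simp), Fin.castSucc_lt_succ.ne, rfl⟩

theorem bsGens_eq_union (m : ℕ) : bsGens (m + 2) =
    Set.range (fun j : Fin (m + 1) ↦ swap 0 j.succ) ∪
      Set.range (fun i : Fin m ↦ swap i.succ.castSucc i.succ.succ) := by
  ext g
  constructor
  · rintro ⟨i, j, hc, hij, rfl⟩
    have hij' : i.val ≠ j.val := Fin.val_ne_of_ne hij
    by_cases hi : i.val = 0
    · refine .inl ⟨⟨j.val - 1, by omega⟩, congrArg₂ swap ?_ ?_⟩ <;> ext <;> simp <;> omega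
    · refine .inr ⟨⟨i.val - 1, by omega⟩, congrArg₂ swap ?_ ?_⟩ <;> ext <;> simp <;> omega
  · rintro (⟨j, rfl⟩ | ⟨i, rfl⟩)
    · exact ⟨0, j.succ, .inr rfl, (Fin.succ_ne_zero j).symm, rfl⟩
    · exact ⟨_, _, .inl (by simp), Fin.castSucc_lt_succ.ne, rfl⟩

theorem ncard_bsGens {n : ℕ} (hn : 2 ≤ n) : (bsGens n).ncard = 2 * n - 3 := by
  obtain ⟨m, rfl⟩ : ∃ m, n = m + 2 := ⟨n - 2, by omega⟩
  have hstar : Function.Injective fun j : Fin (m + 1) ↦ swap 0 j.succ := fun a b h ↦ by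
    simpa using DFunLike.congr_fun h 0
  have hadj : Function.Injective fun i : Fin m ↦ swap i.succ.castSucc i.succ.succ :=
    fun a b h ↦ by
      have := DFunLike.congr_fun h a.succ.castSucc
      rw [swap_apply_left, swap_apply_def] at this
      ext
      split_ifs at this <;> simp_all [Fin.ext_iff]
      omega
  have hdisj : Disjoint (Set.range fun j : Fin (m + 1) ↦ swap 0 j.succ)
      (Set.range fun i : Fin m ↦ swap i.succ.castSucc i.succ.succ) := by
    rw [Set.disjoint_range_iff]
    intro j i h
    have := DFunLike.congr_fun h 0
    rw [swap_apply_left,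
      swap_apply_of_ne_of_ne (by simp [Fin.ext_iff]) (by simp [Fin.ext_iff])] at this
    exact Fin.succ_ne_zero j this
  rw [bsGens_eq_union, Set.ncard_union_eq hdisj, Set.ncard_range_of_injective hstar,
    Set.ncard_range_of_injective hadj, Nat.card_eq_fintype_card, Nat.card_eq_fintype_card,
    Fintype.card_fin, Fintype.card_fin]
  omega

/-- For `n ≥ 3`, the edge connectivity of `BS_n` equals `2n - 3`. -/
theorem BS_edgeConnectivity (n : ℕ) (hn : 3 ≤ n) :
    edgeConnectivity (BS n) = 2 * n - 3 := by
  have hne : (bsGens n).Nonempty :=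
    ⟨_, ⟨⟨0, by omega⟩, ⟨1, by omega⟩, .inl rfl, by simp [Fin.ext_iff], rfl⟩⟩
  rw [BS_eq_mulCayley, edgeConnectivity_mulCayley_of_isSwap (fun _ ↦ isSwap_of_mem_bsGens)
    (closure_bsGens n) hne, ncard_bsGens (by omega)]
end

section
/- The bound 2n−5 in the edge-fault-tolerant strong Menger edge connectivity of BS_n is sharp: for n ≥ 3 there exists an edge set F_e of BS_n with |F_e| = 2n − 4 and two vertices u, v with d_{BS_n−F_e}(u) = d_{BS_n−F_e}(v) = 2n−3 such that BS_n − F_e contains at most 2n − 4 edge-disjoint (u,v)-paths. -/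
open SimpleGraph

/-!
Pick a neighbour `w` of `u` and delete the `2n - 4` other edges at `w`. Then `w` hangs off `u`
alone, so no `u`–`v` path with `v ≠ w` can start along `uw`; since edge-disjoint paths leave `u`
along distinct edges, at most `deg u - 1 = 2n - 4` of them exist. With `u = 1`, `w = (1 2)` and
`v = (2 3)`, the vertex `v` is not adjacent to `w` (`BS_n` is bipartite by sign), so the degrees
of `u` and `v` are untouched.
-/

namespace SimpleGraph

variable {V : Type*} {G : SimpleGraph V} {u v w : V}

theorem HasEdgeDisjointPaths.le_ncard [Finite V] {m : ℕ} {S : Set V} (huv : u ≠ v)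
    (hS : ∀ p : G.Path u v, (p : G.Walk u v).snd ∈ S) (h : HasEdgeDisjointPaths G u v m) :
    m ≤ S.ncard := by
  obtain ⟨P, hP⟩ := h
  have hfirst : ∀ i, s(u, (P i : G.Walk u v).snd) ∈ (P i : G.Walk u v).edges :=
    fun i => Walk.mk_start_snd_mem_edges (Walk.not_nil_of_ne huv)
  have hinj : Function.Injective fun i => (⟨(P i : G.Walk u v).snd, hS (P i)⟩ : S) := by
    intro i j hij
    by_contra hne
    have hsnd : (P i : G.Walk u v).snd = (P j : G.Walk u v).snd := congrArg Subtype.val hij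
    exact hP i j hne (hfirst i) (hsnd ▸ hfirst j)
  simpa using Nat.card_le_card_of_injective _ hinj

theorem Path.snd_ne_of_pendant {p : G.Path u v} (hw : ∀ y, G.Adj w y → y = u) (hwv : w ≠ v) :
    (p : G.Walk u v).snd ≠ w := by
  obtain ⟨p, hp⟩ := p
  cases p with
  | nil => exact fun h => hwv (h ▸ rfl)
  | cons h q =>
    rintro rfl
    cases q with
    | nil => exact hwv rfl
    | cons h' r =>
      rw [Walk.cons_isPath_iff] at hp
      exact hp.2 (hw _ h' ▸ Walk.support_cons h' r ▸ List.mem_cons_of_mem _ r.start_mem_support)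

/-- The set `F_e = E(u₁) - {uu₁}` of the construction, with `w` in the role of `u₁`. -/
def pendantCut (G : SimpleGraph V) (u w : V) : Set (Sym2 V) :=
  G.incidenceSet w \ {s(u, w)}

theorem pendantCut_subset_edgeSet : G.pendantCut u w ⊆ G.edgeSet :=
  fun _ he => G.incidenceSet_subset w he.1

theorem ncard_pendantCut [Finite V] (huw : G.Adj u w) :
    (G.pendantCut u w).ncard = (G.neighborSet w).ncard - 1 := by
  classical
  rw [pendantCut, Set.ncard_sdiff_singleton_of_mem (G.mk'_mem_incidenceSet_right_iff.mpr huw),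
    ← Nat.card_coe_set_eq, Nat.card_congr (G.incidenceSetEquivNeighborSet w),
    Nat.card_coe_set_eq]

theorem eq_of_adj_deleteEdges_pendantCut {y : V} (h : (G.deleteEdges (G.pendantCut u w)).Adj w y) :
    y = u := by
  rw [deleteEdges_adj] at h
  by_contra hyu
  refine h.2 ⟨G.mk'_mem_incidenceSet_left_iff.mpr h.1, ?_⟩
  rw [Set.mem_singleton_iff, Sym2.eq_swap, Sym2.congr_left]
  exact hyu

theorem neighborSet_deleteEdges_pendantCut {x : V} (hxw : x ≠ w) (hx : G.Adj x w → x = u) :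
    (G.deleteEdges (G.pendantCut u w)).neighborSet x = G.neighborSet x := by
  ext y
  simp only [mem_neighborSet, deleteEdges_adj, and_iff_left_iff_imp]
  rintro hxy ⟨hw, hne⟩
  rcases Sym2.mem_iff.mp hw.2 with rfl | rfl
  · exact hxw rfl
  · exact hne (by rw [hx hxy]; exact Set.mem_singleton _)

theorem HasEdgeDisjointPaths.le_of_pendantCut [Finite V] {m : ℕ} (huw : G.Adj u w)
    (huv : u ≠ v) (hwv : w ≠ v)
    (h : HasEdgeDisjointPaths (G.deleteEdges (G.pendantCut u w)) u v m) :
    m ≤ (G.neighborSet u).ncard - 1 := by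
  rw [← Set.ncard_sdiff_singleton_of_mem (show w ∈ G.neighborSet u from huw)]
  refine h.le_ncard huv fun p => ⟨?_, ?_⟩
  · exact deleteEdges_le _ (Walk.adj_snd (Walk.not_nil_of_ne huv))
  · exact p.snd_ne_of_pendant (fun _ => eq_of_adj_deleteEdges_pendantCut) hwv

end SimpleGraph

open Equiv in
theorem Equiv.swap_eq_swap_iff {α : Type*} [DecidableEq α] {a b c d : α} (hab : a ≠ b) :
    swap a b = swap c d ↔ a = c ∧ b = d ∨ a = d ∧ b = c := by
  constructor
  · intro h
    have ha : swap c d a = b := by rw [← h, swap_apply_left]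
    have hb : swap c d b = a := by rw [← h, swap_apply_right]
    rw [swap_apply_def] at ha hb
    grind
  · rintro (⟨rfl, rfl⟩ | ⟨rfl, rfl⟩)
    · rfl
    · exact swap_comm _ _

namespace BS

open Equiv Equiv.Perm

variable {n : ℕ} {x y s : Perm (Fin n)}

def adjSwap (n : ℕ) (k : Fin (n - 1)) : Perm (Fin n) :=
  swap ⟨k, by omega⟩ ⟨k + 1, by omega⟩

def starSwap (n : ℕ) (k : Fin (n - 1)) : Perm (Fin n) :=
  swap ⟨0, by have := k.2; omega⟩ ⟨k + 1, by omega⟩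

def generators (n : ℕ) : Set (Perm (Fin n)) :=
  Set.range (adjSwap n) ∪ Set.range (starSwap n)

theorem mem_generators_iff :
    s ∈ generators n ↔
      ∃ i j : Fin n, (j.val = i.val + 1 ∨ i.val = 0) ∧ i ≠ j ∧ s = swap i j := by
  constructor
  · rintro (⟨k, rfl⟩ | ⟨k, rfl⟩)
    · exact ⟨_, _, Or.inl rfl, by simp [Fin.ext_iff], rfl⟩
    · exact ⟨_, _, Or.inr rfl, by simp [Fin.ext_iff], rfl⟩
  · rintro ⟨i, j, hj | hi, hij, rfl⟩
    · refine Or.inl ⟨⟨i, by omega⟩, ?_⟩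
      simp only [adjSwap, ← hj]
    · have hj : j.val ≠ 0 := fun h => hij (Fin.ext (hi.trans h.symm))
      refine Or.inr ⟨⟨j - 1, by omega⟩, ?_⟩
      simp only [starSwap, ← hi, Nat.sub_add_cancel (Nat.pos_of_ne_zero hj)]

theorem isSwap_of_mem_generators (hs : s ∈ generators n) : s.IsSwap := by
  obtain ⟨i, j, -, hij, rfl⟩ := mem_generators_iff.mp hs
  exact ⟨i, j, hij, rfl⟩

theorem bsRel_iff : BSRel n x y ↔ ∃ s ∈ generators n, y = x * s := by
  simp only [BSRel, mem_generators_iff]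
  constructor
  · rintro ⟨i, j, hc, hij, rfl⟩
    exact ⟨_, ⟨i, j, hc, hij, rfl⟩, rfl⟩
  · rintro ⟨_, ⟨i, j, hc, hij, rfl⟩, rfl⟩
    exact ⟨i, j, hc, hij, rfl⟩

theorem adj_iff_s13 : (BS n).Adj x y ↔ ∃ s ∈ generators n, y = x * s := by
  rw [BS, fromRel_adj, bsRel_iff, bsRel_iff]
  constructor
  · rintro ⟨-, h | ⟨s, hs, rfl⟩⟩
    · exact h
    · obtain ⟨a, b, -, rfl⟩ := isSwap_of_mem_generators hs
      exact ⟨_, hs, by rw [mul_assoc, swap_mul_self, mul_one]⟩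
  · rintro ⟨s, hs, rfl⟩
    obtain ⟨a, b, hab, rfl⟩ := isSwap_of_mem_generators hs
    exact ⟨fun h => hab (swap_eq_one_iff.mp (mul_eq_left.mp h.symm)), Or.inl ⟨_, hs, rfl⟩⟩

theorem neighborSet_eq (x : Perm (Fin n)) : (BS n).neighborSet x = (x * ·) '' generators n := by
  ext y
  simp only [mem_neighborSet, adj_iff_s13, Set.mem_image, eq_comm]

theorem sign_eq_neg_of_adj (h : (BS n).Adj x y) : sign y = -sign x := by
  obtain ⟨s, hs, rfl⟩ := adj_iff_s13.mp h
  rw [Perm.sign_mul, (isSwap_of_mem_generators hs).sign_eq, mul_neg_one]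

theorem adjSwap_injective : Function.Injective (adjSwap n) := by
  intro k k' h
  rw [adjSwap, adjSwap, swap_eq_swap_iff (by simp [Fin.ext_iff])] at h
  simp only [Fin.ext_iff] at h
  ext
  omega

theorem starSwap_injective : Function.Injective (starSwap n) := by
  intro k k' h
  rw [starSwap, starSwap, swap_eq_swap_iff (by simp [Fin.ext_iff])] at h
  simp only [Fin.ext_iff] at h
  ext
  omega

theorem range_adjSwap_inter_range_starSwap (hn : 2 ≤ n) :
    Set.range (adjSwap n) ∩ Set.range (starSwap n) = {adjSwap n ⟨0, by omega⟩} := by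
  refine Set.eq_singleton_iff_unique_mem.mpr ⟨⟨⟨_, rfl⟩, ⟨⟨0, by omega⟩, rfl⟩⟩, ?_⟩
  rintro _ ⟨⟨k, rfl⟩, ⟨k', h⟩⟩
  rw [starSwap, adjSwap, swap_eq_swap_iff (by simp [Fin.ext_iff])] at h
  simp only [Fin.ext_iff] at h
  congr 1
  ext
  simp only
  omega

theorem ncard_generators (hn : 2 ≤ n) : (generators n).ncard = 2 * n - 3 := by
  have hcard :=
    Set.ncard_union_add_ncard_inter (Set.range (adjSwap n)) (Set.range (starSwap n))
  rw [range_adjSwap_inter_range_starSwap hn, Set.ncard_singleton,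
    Set.ncard_range_of_injective adjSwap_injective,
    Set.ncard_range_of_injective starSwap_injective, Nat.card_fin] at hcard
  rw [generators]
  omega

theorem ncard_neighborSet (hn : 2 ≤ n) (x : Perm (Fin n)) :
    ((BS n).neighborSet x).ncard = 2 * n - 3 := by
  rw [neighborSet_eq, Set.ncard_image_of_injective _ (mul_right_injective x), ncard_generators hn]

end BS

open BS Equiv.Perm in
/-- The bound `2n - 5` is sharp: for `n ≥ 3` there is an edge set `F` of size `2n - 4`
and vertices `u ≠ v`, both of degree `2n - 3` in `BS_n - F`, joined by at most `2n - 4`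
edge-disjoint paths in `BS_n - F`. -/
theorem BS_Menger_bound_sharp (n : ℕ) (hn : 3 ≤ n) :
    ∃ F : Set (Sym2 (Equiv.Perm (Fin n))), F ⊆ (BS n).edgeSet ∧ F.ncard = 2 * n - 4 ∧
      ∃ u v : Equiv.Perm (Fin n), u ≠ v ∧
        deg ((BS n).deleteEdges F) u = 2 * n - 3 ∧
        deg ((BS n).deleteEdges F) v = 2 * n - 3 ∧
        ∀ m : ℕ, HasEdgeDisjointPaths ((BS n).deleteEdges F) u v m → m ≤ 2 * n - 4 := by
  set w := adjSwap n ⟨0, by omega⟩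
  set v := adjSwap n ⟨1, by omega⟩
  have hw : (BS n).Adj 1 w := adj_iff_s13.mpr ⟨w, Or.inl ⟨_, rfl⟩, (one_mul w).symm⟩
  have hv : (BS n).Adj 1 v := adj_iff_s13.mpr ⟨v, Or.inl ⟨_, rfl⟩, (one_mul v).symm⟩
  have hwv : w ≠ v := adjSwap_injective.ne (by simp [Fin.ext_iff])
  -- `BS n` is bipartite by parity, and `w`, `v` are both odd.
  have hwv_not_adj : ¬(BS n).Adj w v := fun h => by
    have := sign_eq_neg_of_adj h
    rw [sign_eq_neg_of_adj hv, sign_eq_neg_of_adj hw, Equiv.Perm.sign_one] at this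
    exact absurd this (by decide)
  have hdeg := ncard_neighborSet (show 2 ≤ n by omega)
  refine ⟨(BS n).pendantCut 1 w, pendantCut_subset_edgeSet, ?_, 1, v, hv.ne, ?_, ?_, ?_⟩
  · rw [ncard_pendantCut hw, hdeg]
    omega
  · rw [deg, neighborSet_deleteEdges_pendantCut hw.ne fun _ => rfl, hdeg]
  · rw [deg, neighborSet_deleteEdges_pendantCut hwv.symm fun h => absurd h.symm hwv_not_adj,
      hdeg]
  · intro m h
    have := h.le_of_pendantCut hw hv.ne hwv
    rw [hdeg] at this
    omega
end
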